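/- arXiv:math/0002089 — 2 statements merged into one kernel-verified Lean document; each statement's English description precedes it below -/
import Mathlib

section
/- Let T be an almost linear tree order on an ordinal θ, i.e. (a) for every successor ordinal α+1 < θ the immediate T-predecessor of α+1 lies in the branch [0,α]_T (the set of T-predecessors of α together with α itself), and (b) every node has only finitely many immediate T-successors. Then for every limit ordinal λ ≤ θ the restriction of T to λ has exactly one cofinal branch, namely the branch obtained by recursively choosing, at each node, the largest (as an ordinal) immediate T-successor, and closing under taking limits along cofinal subsets. -/
open Set

/-- A tree order on an ordinal `θ`. -/
structure TreeOrder (θ : Ordinal) (T : Ordinal → Ordinal → Prop) : Prop where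
  lt_of_rel : ∀ {β α : Ordinal}, T β α → β < α
  lt_dom : ∀ {β α : Ordinal}, T β α → α < θ
  zero_rel : ∀ α : Ordinal, 0 < α → α < θ → T 0 α
  rel_trans : ∀ {γ β α : Ordinal}, T γ β → T β α → T γ α
  linear_pred : ∀ {α β γ : Ordinal}, T β α → T γ α → β = γ ∨ T β γ ∨ T γ β
  succ_pred : ∀ α : Ordinal, α + 1 < θ →
    ∃ β, T β (α + 1) ∧ ∀ γ, T γ (α + 1) → γ = β ∨ T γ β
  limit_cofinal : ∀ lam : Ordinal, lam < θ → Order.IsSuccLimit lam →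
    ∀ β < lam, ∃ γ, β ≤ γ ∧ T γ lam

/-- `β` is the immediate `T`-predecessor of `α`. -/
def ImmPred (T : Ordinal → Ordinal → Prop) (β α : Ordinal) : Prop :=
  T β α ∧ ∀ γ, T β γ → T γ α → False

/-- Almost linearity: the immediate predecessor of a successor node `α+1`
lies in `[0,α]_T`, and every node has only finitely many immediate successors. -/
def AlmostLinear (θ : Ordinal) (T : Ordinal → Ordinal → Prop) : Prop :=
  (∀ α : Ordinal, α + 1 < θ → ∀ β, ImmPred T β (α + 1) → β = α ∨ T β α) ∧
  (∀ i : Ordinal, {α : Ordinal | ImmPred T i α}.Finite)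

/-- A cofinal branch of `T` restricted to `lam`. -/
def IsCofinalBranch (lam : Ordinal) (T : Ordinal → Ordinal → Prop)
    (b : Set Ordinal) : Prop :=
  (∀ α ∈ b, α < lam) ∧
  (∀ α ∈ b, ∀ β ∈ b, α = β ∨ T α β ∨ T β α) ∧
  (∀ α ∈ b, ∀ β, T β α → β ∈ b) ∧
  (∀ β < lam, ∃ γ ∈ b, β ≤ γ)

/-!
The unique cofinal branch below `lam` is the *trunk*: the nodes `β < lam` that lie `T`-below every
later node below `lam`. Condition (a) of almost linearity yields the interval property: if `β T α`
then `β T γ` for every `γ` with `β < γ ≤ α`. Hence every cofinal branch consists exactly of trunk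
nodes. The trunk is closed, because a node whose `T`-predecessors are cofinal in it (as an
ordinal) is `T`-below every node those predecessors are `T`-below. It has no largest element:
by (b) a trunk node `s` has finitely many immediate successors, so one of them is `T`-below nodes
cofinally in `lam`, and the interval property puts it in the trunk. So the trunk is cofinal.
-/

variable {θ : Ordinal} {T : Ordinal → Ordinal → Prop}

namespace TreeOrder

lemma rel_of_rel_succ (hT : TreeOrder θ T) (hAL : AlmostLinear θ T) {α β : Ordinal}
    (h : T β (Order.succ α)) : β = α ∨ T β α := by
  rw [Order.succ_eq_add_one] at h
  have hα : α + 1 < θ := hT.lt_dom h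
  obtain ⟨β₀, hβ₀, hmax⟩ := hT.succ_pred α hα
  have hImm : ImmPred T β₀ (α + 1) := by
    refine ⟨hβ₀, fun γ hβ₀γ hγ => ?_⟩
    rcases hmax γ hγ with rfl | hγβ₀
    · exact lt_irrefl _ (hT.lt_of_rel hβ₀γ)
    · exact lt_irrefl _ (hT.lt_of_rel (hT.rel_trans hβ₀γ hγβ₀))
  rcases hmax β h with rfl | hββ₀
  · exact hAL.1 α hα β hImm
  · rcases hAL.1 α hα β₀ hImm with rfl | hβ₀α
    exacts [Or.inr hββ₀, Or.inr (hT.rel_trans hββ₀ hβ₀α)]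

lemma rel_of_lt_of_le (hT : TreeOrder θ T) (hAL : AlmostLinear θ T) {α β γ : Ordinal}
    (hβα : T β α) (hβγ : β < γ) (hγα : γ ≤ α) : T β γ := by
  induction α using WellFoundedLT.induction generalizing β γ with
  | _ α IH =>
    rcases hγα.eq_or_lt with rfl | hγα
    · exact hβα
    rcases Ordinal.zero_or_succ_or_isSuccLimit α with rfl | ⟨δ, rfl⟩ | hlim
    · exact absurd hγα zero_le.not_gt
    · have hγδ : γ ≤ δ := Order.lt_succ_iff.mp hγα
      rcases hT.rel_of_rel_succ hAL hβα with rfl | hβδ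
      · exact absurd hβγ hγδ.not_gt
      · exact IH δ (Order.lt_succ δ) hβδ hβγ hγδ
    · obtain ⟨δ, hγδ, hδα⟩ := hT.limit_cofinal α (hT.lt_dom hβα) hlim γ hγα
      rcases hT.linear_pred hβα hδα with rfl | hβδ | hδβ
      · exact absurd hγδ hβγ.not_ge
      · exact IH δ (hT.lt_of_rel hδα) hβδ hβγ hγδ
      · exact absurd (hγδ.trans_lt (hT.lt_of_rel hδβ)) hβγ.not_gt

lemma rel_of_cofinal (hT : TreeOrder θ T) {s γ : Ordinal} (hγ : γ < θ) (hsγ : s < γ)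
    (H : ∀ η < s, ∃ β, η < β ∧ β < s ∧ T β γ) : T s γ := by
  induction γ using WellFoundedLT.induction with
  | _ γ IH =>
    -- a `T`-predecessor `δ ≥ s` of `γ` inherits the cofinal predecessors below `s`
    suffices ∃ δ, s ≤ δ ∧ T δ γ by
      obtain ⟨δ, hsδ, hδγ⟩ := this
      rcases hsδ.eq_or_lt with rfl | hsδ
      · exact hδγ
      refine hT.rel_trans (IH δ (hT.lt_of_rel hδγ) ((hT.lt_of_rel hδγ).trans hγ)
        hsδ fun η hη => ?_) hδγ
      obtain ⟨β, hηβ, hβs, hβγ⟩ := H η hη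
      refine ⟨β, hηβ, hβs, ?_⟩
      rcases hT.linear_pred hβγ hδγ with rfl | hβδ | hδβ
      · exact absurd hβs hsδ.not_gt
      · exact hβδ
      · exact absurd ((hT.lt_of_rel hδβ).trans hβs) hsδ.not_gt
    rcases Ordinal.zero_or_succ_or_isSuccLimit γ with rfl | ⟨δ, rfl⟩ | hlim
    · exact absurd hsγ zero_le.not_gt
    · rw [Order.succ_eq_add_one] at hγ ⊢
      obtain ⟨β₀, hβ₀, hmax⟩ := hT.succ_pred δ hγ
      refine ⟨β₀, not_lt.1 fun hβ₀s => ?_, hβ₀⟩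
      obtain ⟨β, hβ₀β, -, hβγ⟩ := H β₀ hβ₀s
      rw [Order.succ_eq_add_one] at hβγ
      rcases hmax β hβγ with rfl | hββ₀
      · exact lt_irrefl _ hβ₀β
      · exact (hT.lt_of_rel hββ₀).not_gt hβ₀β
    · exact hT.limit_cofinal γ hγ hlim s hsγ

lemma exists_immPred_of_rel (hT : TreeOrder θ T) {s γ : Ordinal} (h : T s γ) :
    ∃ j, ImmPred T s j ∧ (T j γ ∨ j = γ) := by
  obtain ⟨j, ⟨hsj, hjγ⟩, hmin⟩ :=
    Ordinal.lt_wf.has_min {δ | T s δ ∧ (T δ γ ∨ δ = γ)} ⟨γ, h, Or.inr rfl⟩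
  refine ⟨j, ⟨hsj, fun ε hsε hεj => hmin ε ⟨hsε, Or.inl ?_⟩ (hT.lt_of_rel hεj)⟩, hjγ⟩
  rcases hjγ with hjγ | rfl
  exacts [hT.rel_trans hεj hjγ, hεj]

end TreeOrder

lemma Order.IsSuccLimit.exists_gt_of_finite {lam : Ordinal} (hlim : Order.IsSuccLimit lam)
    {S : Set Ordinal} (hS : S.Finite) (hSlam : ∀ x ∈ S, x < lam) :
    ∃ γ < lam, ∀ x ∈ S, x < γ := by
  have hS0 : (insert 0 S).Finite := hS.insert 0
  have hsup : sSup (insert 0 S) < lam := by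
    refine (hS0.csSup_lt_iff (insert_nonempty _ _)).2 ?_
    rintro x (rfl | hx)
    exacts [hlim.pos, hSlam x hx]
  exact ⟨Order.succ _, hlim.succ_lt hsup,
    fun x hx => Order.lt_succ_iff.2 (le_csSup hS0.bddAbove (mem_insert_of_mem _ hx))⟩

def trunk (lam : Ordinal) (T : Ordinal → Ordinal → Prop) : Set Ordinal :=
  {β | β < lam ∧ ∀ γ, β < γ → γ < lam → T β γ}

section Trunk

variable {lam : Ordinal}

lemma mem_trunk_of_rel (hT : TreeOrder θ T) (hAL : AlmostLinear θ T) {α β : Ordinal}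
    (hα : α ∈ trunk lam T) (hβα : T β α) : β ∈ trunk lam T := by
  refine ⟨(hT.lt_of_rel hβα).trans hα.1, fun γ hβγ hγ => ?_⟩
  rcases le_or_gt γ α with hγα | hαγ
  · exact hT.rel_of_lt_of_le hAL hβα hβγ hγα
  · exact hT.rel_trans hβα (hα.2 γ hαγ hγ)

lemma exists_bound_of_notMem_trunk (hT : TreeOrder θ T) (hAL : AlmostLinear θ T) {j : Ordinal}
    (hj : j < lam) (hjt : j ∉ trunk lam T) :
    ∃ w < lam, ∀ γ, w ≤ γ → γ < lam → ¬T j γ := by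
  obtain ⟨w, hjw, hw, hjw'⟩ : ∃ w, j < w ∧ w < lam ∧ ¬T j w := by
    by_contra! h
    exact hjt ⟨hj, h⟩
  exact ⟨w, hw, fun γ hwγ _ hjγ => hjw' (hT.rel_of_lt_of_le hAL hjγ hjw hwγ)⟩

lemma mem_trunk_of_cofinal (hT : TreeOrder θ T) (hlam : lam ≤ θ) {s : Ordinal} (hs : s < lam)
    (H : ∀ η < s, ∃ β ∈ trunk lam T, η < β ∧ β < s) : s ∈ trunk lam T := by
  refine ⟨hs, fun γ hsγ hγ => hT.rel_of_cofinal (hγ.trans_le hlam) hsγ fun η hη => ?_⟩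
  obtain ⟨β, hβ, hηβ, hβs⟩ := H η hη
  exact ⟨β, hηβ, hβs, hβ.2 γ (hβs.trans hsγ) hγ⟩

/-- Otherwise each of the finitely many immediate successors of `s` has its `T`-cone bounded
below `lam`; a node `γ < lam` above all of them and all these bounds is still `T`-above `s`, hence
`T`-above one of them. -/
lemma exists_mem_trunk_gt (hT : TreeOrder θ T) (hAL : AlmostLinear θ T)
    (hlim : Order.IsSuccLimit lam) {s : Ordinal} (hs : s ∈ trunk lam T) :
    ∃ j ∈ trunk lam T, s < j := by
  by_contra! hmax
  set K := {j | ImmPred T s j} ∩ Iio lam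
  have hK : K.Finite := (hAL.2 s).inter_of_left _
  have hbound : ∀ j ∈ K, ∃ w < lam, ∀ γ, w ≤ γ → γ < lam → ¬T j γ := fun j hj =>
    exists_bound_of_notMem_trunk hT hAL hj.2 fun hjt => (hmax j hjt).not_gt (hT.lt_of_rel hj.1.1)
  choose! w hw_lt hw using hbound
  obtain ⟨γ, hγ, hγS⟩ := hlim.exists_gt_of_finite ((hK.union (hK.image w)).insert s) <| by
    rintro x (rfl | hx | ⟨j, hj, rfl⟩)
    exacts [hs.1, hx.2, hw_lt j hj]
  obtain ⟨j, hsj, hjγ⟩ := hT.exists_immPred_of_rel (hs.2 γ (hγS s (mem_insert _ _)) hγ)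
  have hjK : j ∈ K := ⟨hsj, (hjγ.elim (fun h => (hT.lt_of_rel h).le) le_of_eq).trans_lt hγ⟩
  have hjγ' : T j γ := hjγ.resolve_right (hγS j (mem_insert_of_mem _ (Or.inl hjK))).ne
  exact hw j hjK γ (hγS (w j) (mem_insert_of_mem _ (Or.inr (mem_image_of_mem w hjK)))).le hγ hjγ'

lemma exists_mem_trunk_ge (hT : TreeOrder θ T) (hAL : AlmostLinear θ T) (hlam : lam ≤ θ)
    (hlim : Order.IsSuccLimit lam) {η : Ordinal} (hη : η < lam) :
    ∃ γ ∈ trunk lam T, η ≤ γ := by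
  by_contra! hbound
  have hne : (trunk lam T).Nonempty :=
    ⟨0, hlim.pos, fun γ hγ0 hγ => hT.zero_rel γ hγ0 (hγ.trans_le hlam)⟩
  have hbdd : BddAbove (trunk lam T) := ⟨η, fun β hβ => (hbound β hβ).le⟩
  have hs : sSup (trunk lam T) < lam :=
    (csSup_le hne fun β hβ => (hbound β hβ).le).trans_lt hη
  by_cases hmem : sSup (trunk lam T) ∈ trunk lam T
  · obtain ⟨j, hj, hsj⟩ := exists_mem_trunk_gt hT hAL hlim hmem
    exact hsj.not_ge (le_csSup hbdd hj)
  · refine hmem (mem_trunk_of_cofinal hT hlam hs fun ζ hζ => ?_)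
    obtain ⟨β, hβ, hζβ⟩ := exists_lt_of_lt_csSup hne hζ
    exact ⟨β, hβ, hζβ, (le_csSup hbdd hβ).lt_of_ne (by rintro rfl; exact hmem hβ)⟩

lemma isCofinalBranch_trunk (hT : TreeOrder θ T) (hAL : AlmostLinear θ T) (hlam : lam ≤ θ)
    (hlim : Order.IsSuccLimit lam) : IsCofinalBranch lam T (trunk lam T) := by
  refine ⟨fun α hα => hα.1, fun α hα β hβ => ?_, fun α hα β => mem_trunk_of_rel hT hAL hα,
    fun η hη => exists_mem_trunk_ge hT hAL hlam hlim hη⟩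
  rcases lt_trichotomy α β with hαβ | rfl | hβα
  exacts [Or.inr (Or.inl (hα.2 β hαβ hβ.1)), Or.inl rfl, Or.inr (Or.inr (hβ.2 α hβα hα.1))]

lemma IsCofinalBranch.eq_trunk (hT : TreeOrder θ T) (hAL : AlmostLinear θ T)
    (hlim : Order.IsSuccLimit lam) {b : Set Ordinal} (hb : IsCofinalBranch lam T b) :
    b = trunk lam T := by
  obtain ⟨hb_lt, hb_lin, hb_down, hb_cof⟩ := hb
  ext α
  refine ⟨fun hα => ⟨hb_lt α hα, fun γ hαγ hγ => ?_⟩, fun hα => ?_⟩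
  · obtain ⟨γ', hγ', hγγ'⟩ := hb_cof γ hγ
    rcases hb_lin α hα γ' hγ' with rfl | hαγ' | hγ'α
    · exact absurd hαγ hγγ'.not_gt
    · exact hT.rel_of_lt_of_le hAL hαγ' hαγ hγγ'
    · exact absurd hγγ' ((hT.lt_of_rel hγ'α).trans hαγ).not_ge
  · obtain ⟨γ, hγ, hαγ⟩ := hb_cof (Order.succ α) (hlim.succ_lt hα.1)
    exact hb_down γ hγ α (hα.2 γ ((Order.lt_succ α).trans_le hαγ) (hb_lt γ hγ))

lemma mem_trunk_of_immPred_of_forall_le (hT : TreeOrder θ T) (hAL : AlmostLinear θ T)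
    (hlam : lam ≤ θ) (hlim : Order.IsSuccLimit lam) {i j : Ordinal} (hi : i ∈ trunk lam T)
    (hij : ImmPred T i j) (hj : j < lam) (hmax : ∀ j', ImmPred T i j' → j' < lam → j' ≤ j) :
    j ∈ trunk lam T := by
  obtain ⟨β, hβ, hjβ⟩ := exists_mem_trunk_ge hT hAL hlam hlim (hlim.succ_lt hj)
  have hiβ : T i β := hi.2 β ((hT.lt_of_rel hij.1).trans ((Order.lt_succ j).trans_le hjβ)) hβ.1
  obtain ⟨j₀, hij₀, hj₀β⟩ := hT.exists_immPred_of_rel hiβ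
  have hj₀ : j₀ ∈ trunk lam T := by
    rcases hj₀β with hj₀β | rfl
    exacts [mem_trunk_of_rel hT hAL hβ hj₀β, hβ]
  rcases (hmax j₀ hij₀ hj₀.1).lt_or_eq with hlt | rfl
  · exact (hij.2 j₀ hij₀.1 (hj₀.2 j hlt hj)).elim
  · exact hj₀

end Trunk

/-- An almost linear tree order on `θ` has, below every limit
ordinal `lam ≤ θ`, exactly one cofinal branch; moreover that branch is closed
under taking the largest immediate successor and under limits along cofinal
subsets. -/
theorem almostLinear_unique_cofinal_branch
    (θ : Ordinal) (T : Ordinal → Ordinal → Prop)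
    (hT : TreeOrder θ T) (hAL : AlmostLinear θ T)
    (lam : Ordinal) (hlam : lam ≤ θ) (hlim : Order.IsSuccLimit lam) :
    (∃! b : Set Ordinal, IsCofinalBranch lam T b) ∧
    ∀ b : Set Ordinal, IsCofinalBranch lam T b →
      ((∀ i ∈ b, ∀ j, ImmPred T i j → j < lam →
          (∀ j', ImmPred T i j' → j' < lam → j' ≤ j) → j ∈ b) ∧
       (∀ ν, ν < lam → Order.IsSuccLimit ν →
          (∀ η < ν, ∃ β ∈ b, η < β ∧ T β ν) → ν ∈ b)) := by
  have huniq : ∀ b, IsCofinalBranch lam T b → b = trunk lam T :=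
    fun b hb => hb.eq_trunk hT hAL hlim
  refine ⟨⟨trunk lam T, isCofinalBranch_trunk hT hAL hlam hlim, huniq⟩, fun b hb => ?_⟩
  obtain rfl := huniq b hb
  refine ⟨fun i hi j hij hj hmax =>
    mem_trunk_of_immPred_of_forall_le hT hAL hlam hlim hi hij hj hmax, fun ν hν _ hcof => ?_⟩
  refine mem_trunk_of_cofinal hT hlam hν fun η hη => ?_
  obtain ⟨β, hβ, hηβ, hβν⟩ := hcof η hη
  exact ⟨β, hβ, hηβ, hT.lt_of_rel hβν⟩
end

section
/- Let T be a tree order on an ordinal θ such that every node has only finitely many immediate T-successors and, for every successor ordinal α+1 < θ, the immediate T-predecessor of α+1 lies in [0,α]_T. Suppose b is a cofinal branch of T (a T-linearly ordered, T-downward closed subset, unbounded in θ) where θ is a limit ordinal. Then b is uniquely determined by the following closure properties: (i) if i ∈ b and i has T-successors in θ, then the largest immediate T-successor of i below θ belongs to b; (ii) if λ < θ is a limit ordinal and b ∩ λ is unbounded in λ with cofinally many elements T-below λ, then λ ∈ b. -/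
open Set

/-! In an almost linear tree, the subtree above a node `γ` stays below every later node
`j` that is not itself above `γ`: along a successor step the tree only grows from `[0,α]_T`,
and limit nodes are reached through their cofinal predecessors. Hence a cofinal branch `b`
can never leave `γ ∈ b` behind, so `b` is the set of nodes lying `T`-below all later nodes.
This intrinsic description gives uniqueness at once, and the two closure properties follow
from it together with the closedness of `[0,j]_T` under limits. -/

open Order

namespace TreeOrder

variable {θ : Ordinal} {T : Ordinal → Ordinal → Prop}

theorem rel_of_lt_of_eq_or_rel (hT : TreeOrder θ T) {β x j : Ordinal} (hβ : T β j)
    (hx : x = j ∨ T x j) (hβx : β < x) : T β x := by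
  rcases hx with rfl | hx
  · exact hβ
  rcases hT.linear_pred hβ hx with rfl | h | h
  · exact absurd hβx (lt_irrefl _)
  · exact h
  · exact absurd (hT.lt_of_rel h) hβx.not_gt

theorem eq_or_rel_of_rel_succ (hT : TreeOrder θ T)
    (hpred : ∀ α, α + 1 < θ → ∀ β, ImmPred T β (α + 1) → β = α ∨ T β α)
    {α γ : Ordinal} (hγ : T γ (α + 1)) : γ = α ∨ T γ α := by
  obtain ⟨β, hβ, hβmax⟩ := hT.succ_pred α (hT.lt_dom hγ)
  have hβimm : ImmPred T β (α + 1) := ⟨hβ, fun δ hβδ hδ => by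
    rcases hβmax δ hδ with rfl | hδβ
    · exact (hT.lt_of_rel hβδ).false
    · exact (hT.lt_of_rel (hT.rel_trans hβδ hδβ)).false⟩
  rcases hpred α (hT.lt_dom hγ) β hβimm, hβmax γ hγ with ⟨rfl | hβα, rfl | hγβ⟩
  · exact .inl rfl
  · exact .inr hγβ
  · exact .inr hβα
  · exact .inr (hT.rel_trans hγβ hβα)

theorem lt_of_rel_of_not_rel (hT : TreeOrder θ T)
    (hpred : ∀ α, α + 1 < θ → ∀ β, ImmPred T β (α + 1) → β = α ∨ T β α)
    {γ j : Ordinal} (hγj : γ < j) (hnot : ¬ T γ j) : ∀ ξ, T γ ξ → ξ < j := by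
  intro ξ
  induction ξ using WellFoundedLT.induction with
  | ind ξ ih =>
    intro hγξ
    by_contra! hjξ
    have hjξ : j < ξ := hjξ.lt_of_ne (by rintro rfl; exact hnot hγξ)
    rcases Ordinal.zero_or_succ_or_isSuccLimit ξ with rfl | ⟨α, rfl⟩ | hlim
    · exact zero_le.not_gt hjξ
    · rw [succ_eq_add_one] at hγξ hjξ ih
      have hjα : j ≤ α := lt_add_one_iff.mp hjξ
      rcases hT.eq_or_rel_of_rel_succ hpred hγξ with rfl | hγα
      · exact hγj.not_ge hjα
      · exact (ih α (lt_add_one α) hγα).not_ge hjα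
    · obtain ⟨η, hjη, hηξ⟩ := hT.limit_cofinal ξ (hT.lt_dom hγξ) hlim j hjξ
      rcases hT.linear_pred hγξ hηξ with rfl | hγη | hηγ
      · exact hγj.not_ge hjη
      · exact (ih η (hT.lt_of_rel hηξ) hγη).not_ge hjη
      · exact (hT.lt_of_rel hηγ).not_ge (hγj.le.trans hjη)

theorem rel_of_isSuccLimit (hT : TreeOrder θ T) {lam j : Ordinal} (hlim : IsSuccLimit lam)
    (hlamj : lam < j) (hcof : ∀ η < lam, ∃ β, η < β ∧ β < lam ∧ T β j) : T lam j := by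
  obtain ⟨γ, ⟨hlamγ, hγj⟩, hγmin⟩ :=
    wellFounded_lt.has_min {x | lam ≤ x ∧ (x = j ∨ T x j)} ⟨j, hlamj.le, .inl rfl⟩
  have hγθ : γ < θ := by
    obtain ⟨β, -, -, hβj⟩ := hcof 0 hlim.bot_lt
    rcases hγj with rfl | hγj
    exacts [hT.lt_dom hβj, (hT.lt_of_rel hγj).trans (hT.lt_dom hβj)]
  have hmem_of_rel : ∀ {x}, T x γ → x = j ∨ T x j := fun hx =>
    .inr (hγj.elim (· ▸ hx) (hT.rel_trans hx))
  rcases hlamγ.eq_or_lt with rfl | hlamγ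
  · exact hγj.resolve_left hlamj.ne
  exfalso
  rcases Ordinal.zero_or_succ_or_isSuccLimit γ with rfl | ⟨α, rfl⟩ | hγlim
  · exact zero_le.not_gt hlamγ
  · -- the predecessors of `α + 1` are bounded by its immediate predecessor `β₀ < lam`
    rw [succ_eq_add_one] at hγθ hlamγ hγj hmem_of_rel hγmin
    obtain ⟨β₀, hβ₀, hβ₀max⟩ := hT.succ_pred α hγθ
    have hβ₀lam : β₀ < lam :=
      not_le.mp fun h => hγmin β₀ ⟨h, hmem_of_rel hβ₀⟩ (hT.lt_of_rel hβ₀)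
    obtain ⟨β, hβ₀β, hβlam, hβj⟩ := hcof β₀ hβ₀lam
    have hβγ : T β (α + 1) := hT.rel_of_lt_of_eq_or_rel hβj hγj (hβlam.trans hlamγ)
    rcases hβ₀max β hβγ with rfl | hββ₀
    · exact hβ₀β.false
    · exact (hT.lt_of_rel hββ₀).not_gt hβ₀β
  · obtain ⟨δ, hlamδ, hδγ⟩ := hT.limit_cofinal γ hγθ hγlim lam hlamγ
    exact hγmin δ ⟨hlamδ, hmem_of_rel hδγ⟩ (hT.lt_of_rel hδγ)

end TreeOrder

namespace IsCofinalBranch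

variable {θ : Ordinal} {T : Ordinal → Ordinal → Prop} {b : Set Ordinal}

theorem rel_of_lt (hT : TreeOrder θ T) (hb : IsCofinalBranch θ T b) {α β : Ordinal}
    (hα : α ∈ b) (hβ : β ∈ b) (hαβ : α < β) : T α β := by
  rcases hb.2.1 α hα β hβ with rfl | h | h
  · exact absurd hαβ (lt_irrefl _)
  · exact h
  · exact absurd (hT.lt_of_rel h) hαβ.not_gt

theorem exists_gt (hθ : IsSuccLimit θ) (hb : IsCofinalBranch θ T b) {α : Ordinal}
    (hα : α < θ) : ∃ γ ∈ b, α < γ := by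
  obtain ⟨γ, hγ, hαγ⟩ := hb.2.2.2 (α + 1) (hθ.add_one_lt hα)
  exact ⟨γ, hγ, (lt_add_one α).trans_le hαγ⟩

theorem rel_of_mem_of_lt (hT : TreeOrder θ T) (hθ : IsSuccLimit θ)
    (hpred : ∀ α, α + 1 < θ → ∀ β, ImmPred T β (α + 1) → β = α ∨ T β α)
    (hb : IsCofinalBranch θ T b) {γ j : Ordinal} (hγ : γ ∈ b) (hγj : γ < j) (hj : j < θ) :
    T γ j := by
  by_contra hnot
  obtain ⟨ε, hε, hjε⟩ := hb.exists_gt hθ hj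
  have hγε := hb.rel_of_lt hT hγ hε (hγj.trans hjε)
  exact (hT.lt_of_rel_of_not_rel hpred hγj hnot ε hγε).not_gt hjε

theorem mem_iff (hT : TreeOrder θ T) (hθ : IsSuccLimit θ)
    (hpred : ∀ α, α + 1 < θ → ∀ β, ImmPred T β (α + 1) → β = α ∨ T β α)
    (hb : IsCofinalBranch θ T b) {γ : Ordinal} :
    γ ∈ b ↔ γ < θ ∧ ∀ j, γ < j → j < θ → T γ j := by
  refine ⟨fun hγ => ⟨hb.1 γ hγ, fun j => hb.rel_of_mem_of_lt hT hθ hpred hγ⟩, ?_⟩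
  rintro ⟨hγθ, hγ⟩
  obtain ⟨ε, hε, hγε⟩ := hb.exists_gt hθ hγθ
  exact hb.2.2.1 ε hε γ (hγ ε hγε (hb.1 ε hε))

theorem exists_immPred_mem (hT : TreeOrder θ T) (hθ : IsSuccLimit θ)
    (hb : IsCofinalBranch θ T b) {i : Ordinal} (hi : i ∈ b) : ∃ γ ∈ b, ImmPred T i γ := by
  obtain ⟨γ, ⟨hγ, hiγ⟩, hγmin⟩ := wellFounded_lt.has_min {x | x ∈ b ∧ i < x}
    (hb.exists_gt hθ (hb.1 i hi))
  refine ⟨γ, hγ, hb.rel_of_lt hT hi hγ hiγ, fun ε hiε hεγ => ?_⟩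
  exact hγmin ε ⟨hb.2.2.1 γ hγ ε hεγ, hT.lt_of_rel hiε⟩ (hT.lt_of_rel hεγ)

end IsCofinalBranch

/-- a cofinal branch through an almost linear tree order on a
limit ordinal `θ` satisfies the two closure properties (largest immediate
successor; limits of cofinally-`T`-below sequences) and is uniquely
determined: any cofinal branch coincides with it. -/
theorem cofinal_branch_determined
    (θ : Ordinal) (T : Ordinal → Ordinal → Prop) (hT : TreeOrder θ T)
    (hθ : Order.IsSuccLimit θ) (hAL : AlmostLinear θ T)
    (b : Set Ordinal) (hb : IsCofinalBranch θ T b) :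
    ((∀ i ∈ b, ∀ j, ImmPred T i j → j < θ →
        (∀ j', ImmPred T i j' → j' < θ → j' ≤ j) → j ∈ b) ∧
     (∀ lam, lam < θ → Order.IsSuccLimit lam →
        (∀ η < lam, ∃ β ∈ b, η < β ∧ T β lam) → lam ∈ b)) ∧
    ∀ b' : Set Ordinal, IsCofinalBranch θ T b' → b' = b := by
  refine ⟨⟨fun i hi j hj hjθ hmax => ?_, fun lam hlam hlim hcof => ?_⟩, fun b' hb' => ?_⟩
  · obtain ⟨γ, hγ, hiγ⟩ := hb.exists_immPred_mem hT hθ hi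
    rcases (hmax γ hiγ (hb.1 γ hγ)).eq_or_lt with rfl | hγj
    · exact hγ
    · exact (hj.2 γ hiγ.1 (hb.rel_of_mem_of_lt hT hθ hAL.1 hγ hγj hjθ)).elim
  · refine (hb.mem_iff hT hθ hAL.1).2 ⟨hlam, fun j hlamj hj => ?_⟩
    refine hT.rel_of_isSuccLimit hlim hlamj fun η hη => ?_
    obtain ⟨β, hβ, hηβ, hβlam⟩ := hcof η hη
    have hβlam' : β < lam := hT.lt_of_rel hβlam
    exact ⟨β, hηβ, hβlam', hb.rel_of_mem_of_lt hT hθ hAL.1 hβ (hβlam'.trans hlamj) hj⟩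
  · ext γ
    rw [hb'.mem_iff hT hθ hAL.1, hb.mem_iff hT hθ hAL.1]
end
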